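/- Let M₀ ∈ ℂ. The following are equivalent: (i) there exist positive constants C, M, R such that |τ + M₀ q(ξ)| ≥ C|(τ,ξ)|^{-M} for all (τ,ξ) ∈ ℤ × ℤⁿ with |τ|+|ξ| ≥ R; (ii) there exist positive constants C', M', R' such that |1 - e^{±2πi M₀ q(ξ)}| ≥ C'|ξ|^{-M'} for all ξ ∈ ℤⁿ with |ξ| ≥ R'. Here q : ℤⁿ → ℂ is a fixed symbol with |q(ξ)| ≤ K|ξ|^ν for some K, ν > 0. -/

import Mathlib

open scoped BigOperators

/-!
Write `e(z) = 1 - exp(2πiz)`. Being `1`-periodic, `e` behaves like the distance to `ℤ` near the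
real axis: `|e(z)| ≤ 4π|z + τ|` whenever `τ ∈ ℤ` and `2π|z + τ| ≤ 1`, and
`|e(z)| ≥ 2πe^{-π}|z - k|` for the integer `k` nearest to `Re z` when `|Im z| ≤ 1/2`; away from the
axis, `|Im z| ≥ 1/2`, simply `|e(z)| ≥ 1/2`. For `z = ±M₀ q(ξ)` the integers that matter satisfy
`|τ| ≤ |M₀ q(ξ)| + 1/2 ≲ |ξ|^ν`, so there `|(τ, ξ)|` and `|ξ|` are polynomially comparable, and
each of the two lower bounds yields the other with different exponents.
-/
/-- Euclidean norm of `ξ ∈ ℤⁿ`. -/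
noncomputable def znorm {n : ℕ} (ξ : Fin n → ℤ) : ℝ :=
  Real.sqrt (∑ i, ((ξ i : ℝ)) ^ 2)

/-- Euclidean norm of `(τ, ξ) ∈ ℤ × ℤⁿ`. -/
noncomputable def pairNorm {n : ℕ} (τ : ℤ) (ξ : Fin n → ℤ) : ℝ :=
  Real.sqrt ((τ : ℝ) ^ 2 + ∑ i, ((ξ i : ℝ)) ^ 2)

open Real Complex

namespace Real

lemma exp_neg_abs_mul_abs_le_abs_one_sub_exp (a : ℝ) :
    exp (-|a|) * |a| ≤ |1 - exp a| := by
  rcases le_or_gt 0 a with ha | ha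
  · rw [abs_of_nonneg ha, abs_of_nonpos (by linarith [add_one_le_exp a])]
    nlinarith [add_one_le_exp a, exp_le_one_iff.mpr (neg_nonpos.mpr ha)]
  · have h : exp a * exp (-a) = 1 := by rw [← exp_add, add_neg_cancel, exp_zero]
    rw [abs_of_neg ha, neg_neg, abs_of_pos (by linarith [exp_lt_one_iff.mpr ha])]
    nlinarith [add_one_le_exp (-a), exp_pos a]

lemma one_sub_exp_neg_abs_le_abs_one_sub_exp (a : ℝ) :
    1 - exp (-|a|) ≤ |1 - exp a| := by
  rcases le_or_gt 0 a with ha | ha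
  · rw [abs_of_nonneg ha, abs_of_nonpos (by linarith [add_one_le_exp a])]
    linarith [add_one_le_exp a, one_sub_le_exp_neg a]
  · rw [abs_of_neg ha, neg_neg, abs_of_pos (by linarith [exp_lt_one_iff.mpr ha])]

lemma exp_neg_pi_le_half : exp (-π) ≤ 1 / 2 := by
  have h : exp (-π) * exp π = 1 := by rw [← exp_add, neg_add_cancel, exp_zero]
  nlinarith [add_one_le_exp π, pi_gt_three, exp_pos (-π)]

lemma exp_neg_pi_mul_sq_le_two_mul_one_sub_cos {b : ℝ} (hb : |b| ≤ π) :
    exp (-π) * b ^ 2 ≤ 2 * (1 - cos b) := by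
  have hcos := cos_le_one_sub_mul_cos_sq hb
  have h : exp (-π) * exp π = 1 := by rw [← exp_add, neg_add_cancel, exp_zero]
  have hpi : exp (-π) * π ^ 2 ≤ 4 := by
    nlinarith [add_one_le_exp π, pi_gt_three, pi_le_four, exp_pos (-π)]
  have hb2 : 4 / π ^ 2 * b ^ 2 ≤ 2 * (1 - cos b) := by
    linear_combination 2 * hcos
  refine le_trans ?_ hb2
  gcongr
  rw [le_div_iff₀ (by positivity)]
  exact hpi

end Real

namespace Complex

lemma abs_one_sub_exp_re_le_norm_one_sub_exp (w : ℂ) :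
    |1 - Real.exp w.re| ≤ ‖1 - exp w‖ := by
  simpa [norm_exp] using abs_norm_sub_norm_le (1 : ℂ) (exp w)

lemma norm_one_sub_exp_sq (w : ℂ) :
    ‖1 - exp w‖ ^ 2 = (1 - Real.exp w.re) ^ 2 + 2 * Real.exp w.re * (1 - Real.cos w.im) := by
  rw [Complex.sq_norm, normSq_apply]
  simp only [sub_re, one_re, exp_re, sub_im, one_im, exp_im]
  linear_combination (Real.exp w.re) ^ 2 * Real.sin_sq_add_cos_sq w.im

lemma exp_neg_pi_mul_norm_le_norm_one_sub_exp {w : ℂ} (hre : |w.re| ≤ π) (him : |w.im| ≤ π) :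
    Real.exp (-π) * ‖w‖ ≤ ‖1 - exp w‖ := by
  have hexp_re : Real.exp (-π) ≤ Real.exp w.re := Real.exp_le_exp.mpr (abs_le.mp hre).1
  have hre' : Real.exp (-π) * |w.re| ≤ |1 - Real.exp w.re| :=
    le_trans (by gcongr) (Real.exp_neg_abs_mul_abs_le_abs_one_sub_exp w.re)
  have him' := Real.exp_neg_pi_mul_sq_le_two_mul_one_sub_cos him
  have hsq : (Real.exp (-π) * ‖w‖) ^ 2 ≤ ‖1 - exp w‖ ^ 2 := by
    rw [norm_one_sub_exp_sq, mul_pow, Complex.sq_norm, normSq_apply]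
    have hre_sq := pow_le_pow_left₀ (by positivity) hre' 2
    rw [mul_pow, sq_abs, sq_abs] at hre_sq
    have h1cos : 0 ≤ 2 * (1 - Real.cos w.im) := by linarith [Real.cos_le_one w.im]
    nlinarith [mul_le_mul_of_nonneg_left him' (Real.exp_pos (-π)).le,
      mul_le_mul_of_nonneg_right hexp_re h1cos]
  exact (pow_le_pow_iff_left₀ (by positivity) (norm_nonneg _) two_ne_zero).mp hsq

lemma re_two_pi_mul_I_mul (z : ℂ) : (((2 * π : ℝ) : ℂ) * I * z).re = -(2 * π * z.im) := by
  simp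

lemma im_two_pi_mul_I_mul (z : ℂ) : (((2 * π : ℝ) : ℂ) * I * z).im = 2 * π * z.re := by
  simp

lemma exp_two_pi_mul_I_mul_sub_int (z : ℂ) (k : ℤ) :
    exp (((2 * π : ℝ) : ℂ) * I * (z - k)) = exp (((2 * π : ℝ) : ℂ) * I * z) := by
  convert exp_periodic.sub_int_mul_eq (x := ((2 * π : ℝ) : ℂ) * I * z) k using 2
  push_cast
  ring

lemma norm_two_pi_mul_I_mul (z : ℂ) : ‖((2 * π : ℝ) : ℂ) * I * z‖ = 2 * π * ‖z‖ := by
  rw [norm_mul, norm_mul, norm_real, norm_I, mul_one, Real.norm_of_nonneg (by positivity)]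

lemma two_pi_mul_exp_neg_pi_mul_norm_sub_le {z : ℂ} {k : ℤ} (him : |z.im| ≤ 1 / 2)
    (hre : |z.re - k| ≤ 1 / 2) :
    2 * π * Real.exp (-π) * ‖z - k‖ ≤ ‖1 - exp (((2 * π : ℝ) : ℂ) * I * z)‖ := by
  have hre' : |(((2 * π : ℝ) : ℂ) * I * (z - k)).re| ≤ π := by
    rw [re_two_pi_mul_I_mul, abs_neg, abs_mul, abs_of_pos (by positivity), sub_im, intCast_im,
      sub_zero]
    nlinarith [pi_pos]
  have him' : |(((2 * π : ℝ) : ℂ) * I * (z - k)).im| ≤ π := by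
    rw [im_two_pi_mul_I_mul, abs_mul, abs_of_pos (by positivity), sub_re, intCast_re]
    nlinarith [pi_pos]
  have h := exp_neg_pi_mul_norm_le_norm_one_sub_exp hre' him'
  rw [norm_two_pi_mul_I_mul, exp_two_pi_mul_I_mul_sub_int] at h
  linarith

lemma half_le_norm_one_sub_exp {z : ℂ} (him : 1 / 2 ≤ |z.im|) :
    1 / 2 ≤ ‖1 - exp (((2 * π : ℝ) : ℂ) * I * z)‖ := by
  have hre : π ≤ |(((2 * π : ℝ) : ℂ) * I * z).re| := by
    rw [re_two_pi_mul_I_mul, abs_neg, abs_mul, abs_of_pos (by positivity)]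
    nlinarith [pi_pos]
  calc (1 / 2 : ℝ) ≤ 1 - Real.exp (-π) := by linarith [Real.exp_neg_pi_le_half]
    _ ≤ 1 - Real.exp (-|(((2 * π : ℝ) : ℂ) * I * z).re|) := by gcongr
    _ ≤ _ := (Real.one_sub_exp_neg_abs_le_abs_one_sub_exp _).trans
      (abs_one_sub_exp_re_le_norm_one_sub_exp _)

lemma min_le_norm_one_sub_exp (z : ℂ) {b : ℝ}
    (hb : ∀ τ : ℤ, |(τ : ℝ)| ≤ ‖z‖ + 1 / 2 → b ≤ ‖τ + z‖) :
    min (1 / 2) (2 * π * Real.exp (-π) * b) ≤ ‖1 - exp (((2 * π : ℝ) : ℂ) * I * z)‖ := by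
  rcases le_or_gt (1 / 2) |z.im| with him | him
  · exact (min_le_left _ _).trans (half_le_norm_one_sub_exp him)
  have hround := abs_sub_round z.re
  have hτ : |((-round z.re : ℤ) : ℝ)| ≤ ‖z‖ + 1 / 2 := by
    rw [Int.cast_neg, abs_neg]
    linarith [abs_sub_abs_le_abs_sub (round z.re : ℝ) z.re, abs_sub_comm (round z.re : ℝ) z.re,
      abs_re_le_norm z]
  have hb' : b ≤ ‖z - round z.re‖ := by
    simpa [neg_add_eq_sub] using hb _ hτ
  calc min (1 / 2) (2 * π * Real.exp (-π) * b) ≤ 2 * π * Real.exp (-π) * ‖z - round z.re‖ :=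
        (min_le_right _ _).trans (by gcongr)
    _ ≤ _ := two_pi_mul_exp_neg_pi_mul_norm_sub_le him.le hround

lemma norm_one_sub_exp_le {z : ℂ} {τ : ℤ} (h : 2 * π * ‖τ + z‖ ≤ 1) :
    ‖1 - exp (((2 * π : ℝ) : ℂ) * I * z)‖ ≤ 4 * π * ‖τ + z‖ := by
  have hw : ‖((2 * π : ℝ) : ℂ) * I * (z - ((-τ : ℤ) : ℂ))‖ ≤ 1 := by
    rwa [norm_two_pi_mul_I_mul, Int.cast_neg, sub_neg_eq_add, add_comm]
  have h2 := norm_exp_sub_one_le hw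
  rw [exp_two_pi_mul_I_mul_sub_int, norm_two_pi_mul_I_mul, Int.cast_neg, sub_neg_eq_add,
    add_comm, ← norm_neg, neg_sub] at h2
  linarith

lemma min_le_norm_int_add (z : ℂ) (τ : ℤ) :
    min (1 / (2 * π)) (‖1 - exp (((2 * π : ℝ) : ℂ) * I * z)‖ / (4 * π)) ≤ ‖τ + z‖ := by
  rcases le_or_gt (2 * π * ‖τ + z‖) 1 with h | h
  · refine (min_le_right _ _).trans ?_
    rw [div_le_iff₀ (by positivity)]
    linarith [norm_one_sub_exp_le h]
  · refine (min_le_left _ _).trans ?_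
    rw [div_le_iff₀ (by positivity)]
    linarith

end Complex

section LatticeNorms

variable {n : ℕ}

lemma znorm_nonneg (ξ : Fin n → ℤ) : 0 ≤ znorm ξ := Real.sqrt_nonneg _

lemma znorm_le_pairNorm (τ : ℤ) (ξ : Fin n → ℤ) : znorm ξ ≤ pairNorm τ ξ :=
  Real.sqrt_le_sqrt (le_add_of_nonneg_left (sq_nonneg _))

lemma abs_le_pairNorm (τ : ℤ) (ξ : Fin n → ℤ) : |(τ : ℝ)| ≤ pairNorm τ ξ := by
  rw [← Real.sqrt_sq_eq_abs]
  exact Real.sqrt_le_sqrt (le_add_of_nonneg_right (Finset.sum_nonneg fun i _ => sq_nonneg _))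

lemma pairNorm_le_abs_add_znorm (τ : ℤ) (ξ : Fin n → ℤ) :
    pairNorm τ ξ ≤ |(τ : ℝ)| + znorm ξ := by
  have hsq : znorm ξ ^ 2 = ∑ i, ((ξ i : ℝ)) ^ 2 :=
    Real.sq_sqrt (Finset.sum_nonneg fun i _ => sq_nonneg _)
  rw [pairNorm, Real.sqrt_le_left (add_nonneg (abs_nonneg _) (znorm_nonneg ξ)), ← hsq]
  nlinarith [sq_abs (τ : ℝ), mul_nonneg (abs_nonneg (τ : ℝ)) (znorm_nonneg ξ)]

end LatticeNorms

lemma min_mul_le_min_mul {a b t u : ℝ} (ha : 0 ≤ a) (hb : 0 ≤ b) (ht : 0 ≤ t) (ht1 : t ≤ 1)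
    (htu : t ≤ u) : min a b * t ≤ min a (b * u) := by
  rw [min_mul_of_nonneg _ _ ht]
  exact min_le_min (mul_le_of_le_one_right ha ht1) (mul_le_mul_of_nonneg_left htu hb)

section Conditions

variable {n : ℕ} (M₀ : ℂ) (q : (Fin n → ℤ) → ℂ)

def SiegelCondition : Prop :=
  ∃ C M R : ℝ, 0 < C ∧ 0 < M ∧ 0 < R ∧
    ∀ (τ : ℤ) (ξ : Fin n → ℤ), R ≤ |(τ : ℝ)| + znorm ξ →
      C * pairNorm τ ξ ^ (-M) ≤ ‖(τ : ℂ) + M₀ * q ξ‖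

def ExponentialCondition : Prop :=
  ∃ C' M' R' : ℝ, 0 < C' ∧ 0 < M' ∧ 0 < R' ∧
    ∀ ξ : Fin n → ℤ, R' ≤ znorm ξ →
      C' * znorm ξ ^ (-M') ≤
        ‖1 - Complex.exp (((2 * π : ℝ) : ℂ) * I * M₀ * q ξ)‖ ∧
      C' * znorm ξ ^ (-M') ≤
        ‖1 - Complex.exp (-(((2 * π : ℝ) : ℂ) * I * M₀ * q ξ))‖

variable {M₀ q} {K ν : ℝ}

lemma norm_mul_le_of_growth (hq : ∀ ξ, ‖q ξ‖ ≤ K * znorm ξ ^ ν) (ξ : Fin n → ℤ) :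
    ‖M₀ * q ξ‖ ≤ ‖M₀‖ * K * znorm ξ ^ ν := by
  rw [norm_mul, mul_assoc]
  exact mul_le_mul_of_nonneg_left (hq ξ) (norm_nonneg M₀)

theorem exponentialCondition_of_siegelCondition (hK : 0 ≤ K)
    (hq : ∀ ξ, ‖q ξ‖ ≤ K * znorm ξ ^ ν) (h : SiegelCondition M₀ q) :
    ExponentialCondition M₀ q := by
  obtain ⟨C, M, R, hC, hM, hR, hsiegel⟩ := h
  set D : ℝ := ‖M₀‖ * K + 2
  set N : ℝ := max ν 1
  have hN : 0 ≤ N := zero_le_one.trans (le_max_right ν 1)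
  refine ⟨min (1 / 2) (2 * π * Real.exp (-π) * (C * D ^ (-M))), N * M, max R 1,
    lt_min (by norm_num) (by positivity), by positivity, by positivity, fun ξ hξ => ?_⟩
  set s := znorm ξ
  set z := M₀ * q ξ
  have hs1 : 1 ≤ s := (le_max_right R 1).trans hξ
  have hb : ∀ τ : ℤ, |(τ : ℝ)| ≤ ‖z‖ + 1 / 2 → C * D ^ (-M) * s ^ (-(N * M)) ≤ ‖τ + z‖ := by
    intro τ hτ
    have hsν : s ^ ν ≤ s ^ N := Real.rpow_le_rpow_of_exponent_le hs1 (le_max_left ν 1)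
    have hs : s ≤ s ^ N := by
      simpa using Real.rpow_le_rpow_of_exponent_le hs1 (le_max_right ν 1)
    have hP : pairNorm τ ξ ≤ D * s ^ N := by
      have := mul_le_mul_of_nonneg_left hsν (by positivity : 0 ≤ ‖M₀‖ * K)
      linarith [pairNorm_le_abs_add_znorm τ ξ, norm_mul_le_of_growth (M₀ := M₀) hq ξ]
    have hP0 : 0 < pairNorm τ ξ := by linarith [znorm_le_pairNorm τ ξ]
    calc C * D ^ (-M) * s ^ (-(N * M)) = C * (D * s ^ N) ^ (-M) := by
          rw [Real.mul_rpow (by positivity) (by positivity),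
            ← Real.rpow_mul (by linarith : (0 : ℝ) ≤ s), mul_neg, mul_assoc]
      _ ≤ C * pairNorm τ ξ ^ (-M) :=
          mul_le_mul_of_nonneg_left (Real.rpow_le_rpow_of_nonpos hP0 hP (by linarith)) hC.le
      _ ≤ ‖τ + z‖ := hsiegel τ ξ (by linarith [le_max_left R 1, abs_nonneg (τ : ℝ)])
  have hb_neg : ∀ τ : ℤ, |(τ : ℝ)| ≤ ‖-z‖ + 1 / 2 →
      C * D ^ (-M) * s ^ (-(N * M)) ≤ ‖τ + -z‖ := by
    intro τ hτ
    rw [← norm_neg, neg_add, neg_neg, ← Int.cast_neg]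
    exact hb (-τ) (by rwa [Int.cast_neg, abs_neg, ← norm_neg z])
  have hmin : min (1 / 2) (2 * π * Real.exp (-π) * (C * D ^ (-M))) * s ^ (-(N * M)) ≤
      min (1 / 2) (2 * π * Real.exp (-π) * (C * D ^ (-M) * s ^ (-(N * M)))) := by
    rw [← mul_assoc _ _ (s ^ _)]
    exact min_mul_le_min_mul (by norm_num) (by positivity) (by positivity)
      (Real.rpow_le_one_of_one_le_of_nonpos hs1 (by nlinarith)) le_rfl
  rw [mul_assoc _ M₀, ← mul_neg (((2 * π : ℝ) : ℂ) * I)]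
  exact ⟨hmin.trans (Complex.min_le_norm_one_sub_exp z hb),
    hmin.trans (Complex.min_le_norm_one_sub_exp (-z) hb_neg)⟩

theorem siegelCondition_of_exponentialCondition (hK : 0 ≤ K) (hν : 0 ≤ ν)
    (hq : ∀ ξ, ‖q ξ‖ ≤ K * znorm ξ ^ ν) (h : ExponentialCondition M₀ q) :
    SiegelCondition M₀ q := by
  obtain ⟨C', M', R', hC', hM', hR', hexp⟩ := h
  set A : ℝ := ‖M₀‖ * K * R' ^ ν
  have hA : 0 ≤ A := mul_nonneg (mul_nonneg (norm_nonneg _) hK) (Real.rpow_nonneg hR'.le _)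
  refine ⟨min (1 / (2 * π)) (C' / (4 * π)), M', R' + A + 2,
    lt_min (by positivity) (by positivity), hM', by positivity, fun τ ξ hτξ => ?_⟩
  set P := pairNorm τ ξ
  set s := znorm ξ
  set z := M₀ * q ξ
  have hP1 : 1 ≤ P := by
    linarith [abs_le_pairNorm τ ξ, znorm_le_pairNorm τ ξ, hA]
  have hPM : P ^ (-M') ≤ 1 := Real.rpow_le_one_of_one_le_of_nonpos hP1 (by linarith)
  rcases le_or_gt R' s with hs | hs
  · have hsP : P ^ (-M') ≤ s ^ (-M') :=
      Real.rpow_le_rpow_of_nonpos (hR'.trans_le hs) (znorm_le_pairNorm τ ξ) (by linarith)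
    have hlow := (hexp ξ hs).1
    rw [mul_assoc _ M₀] at hlow
    calc min (1 / (2 * π)) (C' / (4 * π)) * P ^ (-M')
        ≤ min (1 / (2 * π)) (C' / (4 * π) * s ^ (-M')) :=
          min_mul_le_min_mul (by positivity) (by positivity) (by positivity) hPM hsP
      _ ≤ min (1 / (2 * π)) (‖1 - Complex.exp (((2 * π : ℝ) : ℂ) * I * z)‖ / (4 * π)) := by
          rw [div_mul_eq_mul_div]
          gcongr
      _ ≤ ‖τ + z‖ := Complex.min_le_norm_int_add z τ
  · -- for small `|ξ|` the integer `τ` is far from `-z`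
    have hz : ‖z‖ ≤ A := (norm_mul_le_of_growth hq ξ).trans <|
      mul_le_mul_of_nonneg_left (Real.rpow_le_rpow (znorm_nonneg ξ) hs.le hν)
        (mul_nonneg (norm_nonneg _) hK)
    have hτz : ‖(τ : ℂ)‖ ≤ ‖τ + z‖ + ‖z‖ := by simpa using norm_sub_le ((τ : ℂ) + z) z
    rw [Complex.norm_intCast] at hτz
    have hC : min (1 / (2 * π)) (C' / (4 * π)) ≤ 1 :=
      (min_le_left _ _).trans (by rw [div_le_one (by positivity)]; linarith [pi_gt_three])
    calc min (1 / (2 * π)) (C' / (4 * π)) * P ^ (-M') ≤ 1 * 1 :=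
          mul_le_mul hC hPM (by positivity) zero_le_one
      _ ≤ ‖τ + z‖ := by linarith

end Conditions

/-- Equivalence (ii) ⟺ (iii) of Theorem 2(c): for a symbol `q` of polynomial growth,
the Siegel condition `|τ + M₀q(ξ)| ≥ C|(τ,ξ)|^{-M}` holds iff the exponential condition
`|1 - e^{±2πiM₀q(ξ)}| ≥ C'|ξ|^{-M'}` holds. -/
theorem siegel_iff_exponential {n : ℕ} (M₀ : ℂ) (q : (Fin n → ℤ) → ℂ)
    (K ν : ℝ) (hK : 0 < K) (hν : 0 < ν)
    (hq : ∀ ξ, ‖q ξ‖ ≤ K * znorm ξ ^ ν) :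
    (∃ C M R : ℝ, 0 < C ∧ 0 < M ∧ 0 < R ∧
      ∀ (τ : ℤ) (ξ : Fin n → ℤ), R ≤ |(τ : ℝ)| + znorm ξ →
        C * pairNorm τ ξ ^ (-M) ≤ ‖(τ : ℂ) + M₀ * q ξ‖) ↔
    (∃ C' M' R' : ℝ, 0 < C' ∧ 0 < M' ∧ 0 < R' ∧
      ∀ ξ : Fin n → ℤ, R' ≤ znorm ξ →
        C' * znorm ξ ^ (-M') ≤
          ‖1 - Complex.exp (((2 * Real.pi : ℝ) : ℂ) * Complex.I * M₀ * q ξ)‖ ∧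
        C' * znorm ξ ^ (-M') ≤
          ‖1 - Complex.exp (-(((2 * Real.pi : ℝ) : ℂ) * Complex.I * M₀ * q ξ))‖) :=
  ⟨exponentialCondition_of_siegelCondition hK.le hq,
    siegelCondition_of_exponentialCondition hK.le hν.le hq⟩
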